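/- arXiv:1803.00190 — 5 statements merged into one kernel-verified Lean document; each statement's English description precedes it below -/
import Mathlib

section
/- Let Ω ⊆ ℝⁿ be open, X ⊆ Ω a closed convex set, and let ψ(x) = ψ₁(x) − max_{1≤i≤k₂} ψ₂ᵢ(x), where ψ₁ and each ψ₂ᵢ are directionally differentiable on Ω. Then x̄ ∈ X is a d-stationary point of ψ on X if and only if for every index ī ∈ argmax_{1≤i≤k₂} ψ₂ᵢ(x̄), the point x̄ is a d-stationary point of the function ψ₁ − ψ₂ī on X. -/
/-!
Along a ray `x + δ • v`, directional differentiability makes every piece continuous at `δ = 0⁺`,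
so the pieces inactive at `x` stay strictly below an active one for small `δ > 0`. Near `0⁺` the
max is therefore the max over the argmax set, whose pieces all share the value at `x`, and so the
directional derivative of the max is the max of the active directional derivatives. Hence
`ψ'(x; v) ≥ 0` iff `ψ₁'(x; v) ≥ ψ₂ᵢ'(x; v)` for every active `i`.
-/

open Matrix Filter Topology

noncomputable def finMax {k : ℕ} (hk : 0 < k) (g : Fin k → ℝ) : ℝ :=
  Finset.univ.sup' (Finset.univ_nonempty_iff.mpr ⟨⟨0, hk⟩⟩) g

/-- The one-sided directional derivative of `ψ` at `x` in direction `v` equals `L`. -/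
def HasDirDeriv {n : ℕ} (ψ : (Fin n → ℝ) → ℝ) (x v : Fin n → ℝ) (L : ℝ) : Prop :=
  Filter.Tendsto (fun δ : ℝ => (ψ (x + δ • v) - ψ x) / δ) (nhdsWithin 0 (Set.Ioi 0)) (nhds L)

/-- `x₀` is a d(irectional)-stationary point of `ψ` on `X`. -/
def DStat {n : ℕ} (ψ : (Fin n → ℝ) → ℝ) (X : Set (Fin n → ℝ)) (x₀ : Fin n → ℝ) : Prop :=
  x₀ ∈ X ∧ ∀ x ∈ X, ∃ L, HasDirDeriv ψ x₀ (x - x₀) L ∧ 0 ≤ L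

open Finset

section Argmax

variable {ι : Type*} [Fintype ι] (g : ι → ℝ)

noncomputable def argmaxFinset : Finset ι :=
  univ.filter fun i => ∀ j, g j ≤ g i

variable {g}

theorem mem_argmaxFinset {i : ι} : i ∈ argmaxFinset g ↔ ∀ j, g j ≤ g i := by
  simp [argmaxFinset]

theorem argmaxFinset_nonempty [Nonempty ι] : (argmaxFinset g).Nonempty := by
  obtain ⟨i, -, hi⟩ := exists_max_image univ g univ_nonempty
  exact ⟨i, mem_argmaxFinset.2 fun j => hi j (mem_univ j)⟩

end Argmax

section FinMax

variable {k : ℕ} (hk : 0 < k) {g : Fin k → ℝ}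

theorem finMax_eq_of_mem_argmaxFinset {i : Fin k} (hi : i ∈ argmaxFinset g) : finMax hk g = g i :=
  le_antisymm (sup'_le _ _ fun j _ => mem_argmaxFinset.1 hi j) (le_sup' g (mem_univ i))

theorem finMax_eq_sup'_of_forall_exists_le {s : Finset (Fin k)} (hs : s.Nonempty)
    (h : ∀ i, ∃ j ∈ s, g i ≤ g j) : finMax hk g = s.sup' hs g := by
  refine le_antisymm (sup'_le _ _ fun i _ => ?_) (sup'_le _ _ fun i _ => le_sup' g (mem_univ i))
  obtain ⟨j, hj, hij⟩ := h i
  exact hij.trans (le_sup' g hj)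

end FinMax

namespace HasDirDeriv

variable {n : ℕ} {ψ φ : (Fin n → ℝ) → ℝ} {x v : Fin n → ℝ} {L L' : ℝ}

theorem unique (h : HasDirDeriv ψ x v L) (h' : HasDirDeriv ψ x v L') : L = L' :=
  tendsto_nhds_unique h h'

theorem sub (hψ : HasDirDeriv ψ x v L) (hφ : HasDirDeriv φ x v L') :
    HasDirDeriv (fun y => ψ y - φ y) x v (L - L') :=
  (Tendsto.sub hψ hφ).congr fun δ => by ring

theorem tendsto_along_ray (h : HasDirDeriv ψ x v L) :
    Tendsto (fun δ : ℝ => ψ (x + δ • v)) (𝓝[>] 0) (𝓝 (ψ x)) := by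
  have hδ : Tendsto (fun δ : ℝ => δ) (𝓝[>] 0) (𝓝 0) := nhdsWithin_le_nhds
  have := (hδ.mul h).const_add (ψ x)
  rw [zero_mul, add_zero] at this
  refine this.congr' ?_
  filter_upwards [self_mem_nhdsWithin] with δ (hδ : 0 < δ)
  field_simp
  ring

theorem congr_of_eventuallyEq (h : HasDirDeriv ψ x v L)
    (hφ : ∀ᶠ δ in 𝓝[>] (0 : ℝ), φ (x + δ • v) = ψ (x + δ • v)) (hx : φ x = ψ x) :
    HasDirDeriv φ x v L := by
  refine Tendsto.congr' ?_ h
  filter_upwards [hφ] with δ hδ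
  rw [hδ, hx]

theorem exists_nonneg_iff (h : HasDirDeriv ψ x v L) :
    (∃ L', HasDirDeriv ψ x v L' ∧ 0 ≤ L') ↔ 0 ≤ L :=
  ⟨fun ⟨_, h', hL'⟩ => h'.unique h ▸ hL', fun hL => ⟨L, h, hL⟩⟩

theorem finset_sup' {ι : Type*} {s : Finset ι} (hs : s.Nonempty) {f : ι → (Fin n → ℝ) → ℝ}
    {L : ι → ℝ} {c : ℝ} (hf : ∀ i ∈ s, HasDirDeriv (f i) x v (L i)) (hc : ∀ i ∈ s, f i x = c) :
    HasDirDeriv (fun y => s.sup' hs (f · y)) x v (s.sup' hs L) := by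
  have hlim := Tendsto.finset_sup'_nhds_apply hs fun i hi => by
    simpa only [HasDirDeriv, hc i hi] using hf i hi
  refine hlim.congr' ?_
  filter_upwards [self_mem_nhdsWithin] with δ (hδ : 0 < δ)
  have hcx : s.sup' hs (f · x) = c := by
    rw [sup'_congr hs rfl hc, sup'_const]
  rw [hcx, sub_eq_add_neg, sup'_add, sup'_div₀ hδ.le]
  simp only [sub_eq_add_neg]

end HasDirDeriv

section FinMaxDerivative

variable {n k : ℕ} (hk : 0 < k) {x v : Fin n → ℝ}

theorem HasDirDeriv.finMax {f : Fin k → (Fin n → ℝ) → ℝ} {L : Fin k → ℝ}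
    (hA : (argmaxFinset (f · x)).Nonempty) (hf : ∀ i, HasDirDeriv (f i) x v (L i)) :
    HasDirDeriv (fun y => finMax hk (f · y)) x v ((argmaxFinset (f · x)).sup' hA L) := by
  have hsup := HasDirDeriv.finset_sup' hA (fun i _ => hf i)
    (fun i hi => (finMax_eq_of_mem_argmaxFinset hk hi).symm)
  obtain ⟨i₀, hi₀⟩ := id hA
  have hdominated : ∀ i, ∀ᶠ δ in 𝓝[>] (0 : ℝ),
      ∃ j ∈ argmaxFinset (f · x), f i (x + δ • v) ≤ f j (x + δ • v) := by
    intro i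
    by_cases hi : i ∈ argmaxFinset (f · x)
    · exact .of_forall fun δ => ⟨i, hi, le_rfl⟩
    · have hlt : f i x < f i₀ x := by
        obtain ⟨j, hj⟩ : ∃ j, f i x < f j x := by simpa [mem_argmaxFinset] using hi
        exact hj.trans_le (mem_argmaxFinset.1 hi₀ j)
      exact ((hf i).tendsto_along_ray.eventually_lt (hf i₀).tendsto_along_ray hlt).mono
        fun δ hδ => ⟨i₀, hi₀, hδ.le⟩
  refine hsup.congr_of_eventuallyEq ?_
    (finMax_eq_sup'_of_forall_exists_le hk hA fun i => ⟨i₀, hi₀, mem_argmaxFinset.1 hi₀ i⟩)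
  filter_upwards [eventually_all.2 hdominated] with δ hδ
  exact finMax_eq_sup'_of_forall_exists_le hk hA hδ

theorem exists_hasDirDeriv_sub_finMax_nonneg_iff {ψ₁ : (Fin n → ℝ) → ℝ}
    {ψ₂ : Fin k → (Fin n → ℝ) → ℝ} (h₁ : ∃ L, HasDirDeriv ψ₁ x v L)
    (h₂ : ∀ i, ∃ L, HasDirDeriv (ψ₂ i) x v L) :
    (∃ L, HasDirDeriv (fun y => ψ₁ y - finMax hk (ψ₂ · y)) x v L ∧ 0 ≤ L) ↔
      ∀ i ∈ argmaxFinset (ψ₂ · x), ∃ L, HasDirDeriv (fun y => ψ₁ y - ψ₂ i y) x v L ∧ 0 ≤ L := by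
  obtain ⟨L₁, hL₁⟩ := h₁
  choose L hL using h₂
  have : Nonempty (Fin k) := ⟨⟨0, hk⟩⟩
  rw [(hL₁.sub (HasDirDeriv.finMax hk argmaxFinset_nonempty hL)).exists_nonneg_iff, sub_nonneg,
    sup'_le_iff]
  refine forall₂_congr fun i _ => ?_
  rw [(hL₁.sub (hL i)).exists_nonneg_iff, sub_nonneg]

end FinMaxDerivative

theorem stmt_0_general {n k₂ : ℕ} (hk : 0 < k₂)
    (Ω X : Set (Fin n → ℝ)) (hXΩ : X ⊆ Ω)
    (ψ₁ : (Fin n → ℝ) → ℝ) (ψ₂ : Fin k₂ → (Fin n → ℝ) → ℝ)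
    (hdd₁ : ∀ x ∈ Ω, ∀ v, ∃ L, HasDirDeriv ψ₁ x v L)
    (hdd₂ : ∀ i, ∀ x ∈ Ω, ∀ v, ∃ L, HasDirDeriv (ψ₂ i) x v L)
    (ψ : (Fin n → ℝ) → ℝ)
    (hψ : ∀ x, ψ x = ψ₁ x - finMax hk (fun i => ψ₂ i x))
    (x₀ : Fin n → ℝ) :
    DStat ψ X x₀ ↔
      ∀ i : Fin k₂, (∀ j, ψ₂ j x₀ ≤ ψ₂ i x₀) →
        DStat (fun x => ψ₁ x - ψ₂ i x) X x₀ := by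
  obtain rfl : ψ = fun x => ψ₁ x - finMax hk (ψ₂ · x) := funext hψ
  have key : ∀ y ∈ X, ∀ v, _ := fun y hy v =>
    exists_hasDirDeriv_sub_finMax_nonneg_iff hk (hdd₁ y (hXΩ hy) v) fun i => hdd₂ i y (hXΩ hy) v
  constructor
  · rintro ⟨hx₀, hstat⟩ i hi
    exact ⟨hx₀, fun x hx => (key x₀ hx₀ _).1 (hstat x hx) i (mem_argmaxFinset.2 hi)⟩
  · intro h
    have : Nonempty (Fin k₂) := ⟨⟨0, hk⟩⟩
    obtain ⟨i₀, hi₀⟩ := argmaxFinset_nonempty (g := (ψ₂ · x₀))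
    have hx₀ : x₀ ∈ X := (h i₀ (mem_argmaxFinset.1 hi₀)).1
    exact ⟨hx₀, fun x hx => (key x₀ hx₀ _).2 fun i hi => (h i (mem_argmaxFinset.1 hi)).2 x hx⟩

/-- Lemma 1: for `ψ = ψ₁ - max_i ψ₂ᵢ` with all pieces directionally differentiable on an
open set `Ω` containing the closed convex set `X`, a point `x₀ ∈ X` is d-stationary for
`ψ` on `X` iff it is d-stationary for `ψ₁ - ψ₂ᵢ` on `X` for every `i` in the argmax. -/
theorem stmt_0 {n k₂ : ℕ} (hk : 0 < k₂)
    (Ω X : Set (Fin n → ℝ)) (hΩ : IsOpen Ω) (hXΩ : X ⊆ Ω)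
    (hXclosed : IsClosed X) (hXconv : Convex ℝ X)
    (ψ₁ : (Fin n → ℝ) → ℝ) (ψ₂ : Fin k₂ → (Fin n → ℝ) → ℝ)
    (hdd₁ : ∀ x ∈ Ω, ∀ v, ∃ L, HasDirDeriv ψ₁ x v L)
    (hdd₂ : ∀ i, ∀ x ∈ Ω, ∀ v, ∃ L, HasDirDeriv (ψ₂ i) x v L)
    (ψ : (Fin n → ℝ) → ℝ)
    (hψ : ∀ x, ψ x = ψ₁ x - finMax hk (fun i => ψ₂ i x))
    (x₀ : Fin n → ℝ) (hx₀ : x₀ ∈ X) :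
    DStat ψ X x₀ ↔
      ∀ i : Fin k₂, (∀ j, ψ₂ j x₀ ≤ ψ₂ i x₀) →
        DStat (fun x => ψ₁ x - ψ₂ i x) X x₀ :=
  stmt_0_general hk Ω X hXΩ ψ₁ ψ₂ hdd₁ hdd₂ ψ hψ x₀
end

section
/- Let X ⊆ ℝⁿ be a polyhedral set and let ψ : X → ℝ be a continuous piecewise linear-quadratic function on X. Then the set ψ(D_{(ψ,X)}) of d-stationary values of ψ on X is finite. -/
open Matrix Filter Topology

/-- A polyhedral subset of ℝⁿ: solution set of finitely many linear inequalities. -/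
def IsPolyhedral {n : ℕ} (X : Set (Fin n → ℝ)) : Prop :=
  ∃ (m : ℕ) (A : Fin m → Fin n → ℝ) (b : Fin m → ℝ), X = {x | ∀ i, A i ⬝ᵥ x ≤ b i}


/-- A quadratic function on ℝⁿ: x ↦ (1/2)xᵀQx + qᵀx + α with Q symmetric. -/
def IsQuadraticFn {n : ℕ} (f : (Fin n → ℝ) → ℝ) : Prop :=
  ∃ (Q : Matrix (Fin n) (Fin n) ℝ) (q : Fin n → ℝ) (α : ℝ), Q.IsSymm ∧
    ∀ x, f x = (1/2) * (x ⬝ᵥ Q.mulVec x) + q ⬝ᵥ x + α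


/-- `ψ` is piecewise linear-quadratic on `X`: `X` is a union of finitely many polyhedral
sets on each of which `ψ` coincides with a quadratic function. -/
def IsPLQOn {n : ℕ} (ψ : (Fin n → ℝ) → ℝ) (X : Set (Fin n → ℝ)) : Prop :=
  ∃ (k : ℕ) (C : Fin k → Set (Fin n → ℝ)) (f : Fin k → (Fin n → ℝ) → ℝ),
    (∀ i, IsPolyhedral (C i)) ∧ (∀ i, IsQuadraticFn (f i)) ∧
    X = ⋃ i, C i ∧ ∀ i, Set.EqOn ψ (f i) (C i)

/-!
On a polyhedral piece `P = {z | A z ≤ b}` on which `ψ` agrees with a quadratic `f`, a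
d-stationary point `x` sees every direction `v` with `A_j v = 0` for the active constraints `j`
as feasible in both signs, so `∇f(x) ⬝ v = 0`. If `x, y ∈ P` are d-stationary with the same
active set, `v = y - x` is such a direction at both points, and for a quadratic
`f y - f x = ½ (∇f(x) + ∇f(y)) ⬝ (y - x) = 0`. Hence `ψ` is constant on the d-stationary points
with a given piece and active set, and there are finitely many of those classes.
-/

theorem Matrix.IsSymm.dotProduct_mulVec_comm {ι R : Type*} [Fintype ι] [CommSemiring R]
    {M : Matrix ι ι R} (hM : M.IsSymm) (u w : ι → R) : u ⬝ᵥ M *ᵥ w = w ⬝ᵥ M *ᵥ u := by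
  rw [dotProduct_mulVec, ← mulVec_transpose, hM.eq, dotProduct_comm]

noncomputable def quadratic {n : ℕ} (Q : Matrix (Fin n) (Fin n) ℝ) (q : Fin n → ℝ) (α : ℝ)
    (x : Fin n → ℝ) : ℝ :=
  (1/2) * (x ⬝ᵥ Q *ᵥ x) + q ⬝ᵥ x + α

section Quadratic

variable {n : ℕ} {Q : Matrix (Fin n) (Fin n) ℝ} {q : Fin n → ℝ} {α : ℝ}

theorem IsQuadraticFn.exists_eq_quadratic {f : (Fin n → ℝ) → ℝ} (hf : IsQuadraticFn f) :
    ∃ (Q : Matrix (Fin n) (Fin n) ℝ) (q : Fin n → ℝ) (α : ℝ), Q.IsSymm ∧ f = quadratic Q q α :=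
  let ⟨Q, q, α, hQ, hfQ⟩ := hf
  ⟨Q, q, α, hQ, funext hfQ⟩

theorem quadratic_add_smul (hQ : Q.IsSymm) (x v : Fin n → ℝ) (δ : ℝ) :
    quadratic Q q α (x + δ • v) =
      quadratic Q q α x + δ * ((Q *ᵥ x + q) ⬝ᵥ v) + δ ^ 2 * ((1/2) * (v ⬝ᵥ Q *ᵥ v)) := by
  have hsymm := hQ.dotProduct_mulVec_comm x v
  simp only [quadratic, mulVec_add, mulVec_smul, dotProduct_add, add_dotProduct,
    dotProduct_smul, smul_dotProduct, smul_eq_mul, dotProduct_comm (Q *ᵥ x) v]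
  linear_combination (δ / 2) * hsymm

theorem quadratic_sub_quadratic (hQ : Q.IsSymm) (x y : Fin n → ℝ) :
    quadratic Q q α y - quadratic Q q α x =
      (1/2) * ((Q *ᵥ x + q) ⬝ᵥ (y - x) + (Q *ᵥ y + q) ⬝ᵥ (y - x)) := by
  have hsymm := hQ.dotProduct_mulVec_comm x y
  simp only [quadratic, add_dotProduct, dotProduct_sub, dotProduct_comm (Q *ᵥ _)]
  linear_combination (1/2) * hsymm

theorem hasDirDeriv_quadratic (hQ : Q.IsSymm) (x v : Fin n → ℝ) :
    HasDirDeriv (quadratic Q q α) x v ((Q *ᵥ x + q) ⬝ᵥ v) := by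
  set c := (Q *ᵥ x + q) ⬝ᵥ v
  set e := (1/2) * (v ⬝ᵥ Q *ᵥ v)
  have hquot : ∀ δ ∈ Set.Ioi (0 : ℝ),
      c + δ * e = (quadratic Q q α (x + δ • v) - quadratic Q q α x) / δ := by
    intro δ hδ
    rw [quadratic_add_smul hQ, eq_div_iff hδ.ne']
    ring
  have hlim : Tendsto (fun δ : ℝ => c + δ * e) (𝓝[>] 0) (𝓝 c) :=
    (Continuous.tendsto' (by fun_prop) 0 c (by simp)).mono_left nhdsWithin_le_nhds
  exact hlim.congr' (eventually_nhdsWithin_of_forall hquot)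

end Quadratic

section DirDeriv

variable {n : ℕ} {ψ f : (Fin n → ℝ) → ℝ} {x v : Fin n → ℝ} {L L' : ℝ}

theorem HasDirDeriv.unique_s1 (h : HasDirDeriv ψ x v L) (h' : HasDirDeriv ψ x v L') : L = L' :=
  tendsto_nhds_unique h h'

theorem HasDirDeriv.congr_of_eventuallyEq_s1 (hf : HasDirDeriv f x v L) (hx : ψ x = f x)
    (hev : ∀ᶠ δ : ℝ in 𝓝[>] 0, ψ (x + δ • v) = f (x + δ • v)) : HasDirDeriv ψ x v L := by
  refine hf.congr' ?_
  filter_upwards [hev] with δ hδ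
  rw [hδ, hx]

end DirDeriv

section Polyhedron

variable {n : ℕ} {ι : Type*} (A : ι → Fin n → ℝ) (b : ι → ℝ)

def polyhedron : Set (Fin n → ℝ) := {z | ∀ j, A j ⬝ᵥ z ≤ b j}

def activeSet (x : Fin n → ℝ) : Set ι := {j | A j ⬝ᵥ x = b j}

variable {A b}

theorem eventually_add_smul_mem_polyhedron [Finite ι] {x v : Fin n → ℝ}
    (hx : x ∈ polyhedron A b) (hv : ∀ j ∈ activeSet A b x, A j ⬝ᵥ v ≤ 0) :
    ∀ᶠ δ : ℝ in 𝓝[>] 0, x + δ • v ∈ polyhedron A b := by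
  refine eventually_all.mpr fun j => ?_
  rcases (hx j).eq_or_lt with hj | hj
  · filter_upwards [self_mem_nhdsWithin] with δ hδ
    rw [dotProduct_add, dotProduct_smul, smul_eq_mul, hj]
    exact add_le_of_nonpos_right (mul_nonpos_of_nonneg_of_nonpos (le_of_lt hδ) (hv j hj))
  · have hlim : Tendsto (fun δ : ℝ => A j ⬝ᵥ (x + δ • v)) (𝓝[>] 0) (𝓝 (A j ⬝ᵥ x)) :=
      (Continuous.tendsto' (by fun_prop) 0 _ (by simp)).mono_left nhdsWithin_le_nhds
    exact (hlim.eventually_lt_const hj).mono fun δ => le_of_lt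

end Polyhedron

section Stationary

variable {n : ℕ} {ι : Type*} [Finite ι] {A : ι → Fin n → ℝ} {b : ι → ℝ}
  {X : Set (Fin n → ℝ)} {ψ : (Fin n → ℝ) → ℝ}
  {Q : Matrix (Fin n) (Fin n) ℝ} {q : Fin n → ℝ} {α : ℝ}

theorem DStat.gradient_dotProduct_nonneg (hQ : Q.IsSymm) (hPX : polyhedron A b ⊆ X)
    (hψ : Set.EqOn ψ (quadratic Q q α) (polyhedron A b)) {x : Fin n → ℝ}
    (hx : DStat ψ X x) (hxP : x ∈ polyhedron A b) {v : Fin n → ℝ}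
    (hv : ∀ j ∈ activeSet A b x, A j ⬝ᵥ v ≤ 0) :
    0 ≤ (Q *ᵥ x + q) ⬝ᵥ v := by
  obtain ⟨δ, hδP, hδ⟩ :=
    ((eventually_add_smul_mem_polyhedron hxP hv).and self_mem_nhdsWithin).exists
  obtain ⟨L, hL, hL_nonneg⟩ := hx.2 _ (hPX hδP)
  rw [add_sub_cancel_left] at hL
  have hδv : ∀ j ∈ activeSet A b x, A j ⬝ᵥ (δ • v) ≤ 0 := fun j hj => by
    rw [dotProduct_smul, smul_eq_mul]
    exact mul_nonpos_of_nonneg_of_nonpos (le_of_lt hδ) (hv j hj)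
  have hψL : HasDirDeriv ψ x (δ • v) ((Q *ᵥ x + q) ⬝ᵥ (δ • v)) :=
    (hasDirDeriv_quadratic hQ x _).congr_of_eventuallyEq_s1 (hψ hxP)
      ((eventually_add_smul_mem_polyhedron hxP hδv).mono fun _ h => hψ h)
  rw [hL.unique_s1 hψL, dotProduct_smul, smul_eq_mul] at hL_nonneg
  exact nonneg_of_mul_nonneg_right hL_nonneg hδ

theorem DStat.gradient_dotProduct_eq_zero (hQ : Q.IsSymm) (hPX : polyhedron A b ⊆ X)
    (hψ : Set.EqOn ψ (quadratic Q q α) (polyhedron A b)) {x : Fin n → ℝ}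
    (hx : DStat ψ X x) (hxP : x ∈ polyhedron A b) {v : Fin n → ℝ}
    (hv : ∀ j ∈ activeSet A b x, A j ⬝ᵥ v = 0) :
    (Q *ᵥ x + q) ⬝ᵥ v = 0 := by
  have hpos := hx.gradient_dotProduct_nonneg hQ hPX hψ hxP fun j hj => (hv j hj).le
  have hneg := hx.gradient_dotProduct_nonneg hQ hPX hψ hxP (v := -v) fun j hj => by
    rw [dotProduct_neg, hv j hj, neg_zero]
  rw [dotProduct_neg] at hneg
  linarith

theorem DStat.eq_of_activeSet_eq (hQ : Q.IsSymm) (hPX : polyhedron A b ⊆ X)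
    (hψ : Set.EqOn ψ (quadratic Q q α) (polyhedron A b)) {x y : Fin n → ℝ}
    (hx : DStat ψ X x) (hy : DStat ψ X y) (hxP : x ∈ polyhedron A b)
    (hyP : y ∈ polyhedron A b) (hact : activeSet A b x = activeSet A b y) :
    ψ x = ψ y := by
  have hyx : ∀ j ∈ activeSet A b x, A j ⬝ᵥ (y - x) = 0 := fun j hjx => by
    have hjy : j ∈ activeSet A b y := hact ▸ hjx
    rw [dotProduct_sub, hjx, hjy, sub_self]
  have hgx := hx.gradient_dotProduct_eq_zero hQ hPX hψ hxP hyx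
  have hgy := hy.gradient_dotProduct_eq_zero hQ hPX hψ hyP (hact ▸ hyx)
  have hdiff := quadratic_sub_quadratic (q := q) (α := α) hQ x y
  rw [hgx, hgy, add_zero, mul_zero, sub_eq_zero] at hdiff
  rw [hψ hxP, hψ hyP, hdiff]

theorem subsingleton_image_dStat_activeSet_eq (hQ : Q.IsSymm) (hPX : polyhedron A b ⊆ X)
    (hψ : Set.EqOn ψ (quadratic Q q α) (polyhedron A b)) (J : Set ι) :
    (ψ '' {x | DStat ψ X x ∧ x ∈ polyhedron A b ∧ activeSet A b x = J}).Subsingleton := by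
  rintro _ ⟨x, ⟨hx, hxP, hxJ⟩, rfl⟩ _ ⟨y, ⟨hy, hyP, hyJ⟩, rfl⟩
  exact hx.eq_of_activeSet_eq hQ hPX hψ hy hxP hyP (hxJ.trans hyJ.symm)

end Stationary

theorem stmt_1_general {n : ℕ} (X : Set (Fin n → ℝ))
    (ψ : (Fin n → ℝ) → ℝ) (hplq : IsPLQOn ψ X) :
    (ψ '' {x | DStat ψ X x}).Finite := by
  obtain ⟨k, C, f, hpoly, hquad, hXC, hψf⟩ := hplq
  choose m A b hCP using hpoly
  change ∀ i, C i = polyhedron (A i) (b i) at hCP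
  choose Q q α hQ hfQ using fun i => (hquad i).exists_eq_quadratic
  have hPX : ∀ i, polyhedron (A i) (b i) ⊆ X := fun i => by
    rw [hXC, ← hCP i]
    exact Set.subset_iUnion C i
  have hψ : ∀ i, Set.EqOn ψ (quadratic (Q i) (q i) (α i)) (polyhedron (A i) (b i)) := fun i => by
    rw [← hfQ i]
    exact hCP i ▸ hψf i
  refine (Set.finite_iUnion fun i => Set.finite_iUnion fun J =>
    (subsingleton_image_dStat_activeSet_eq (hQ i) (hPX i) (hψ i) J).finite).subset ?_
  rintro _ ⟨x, hx, rfl⟩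
  obtain ⟨i, hxC⟩ := Set.mem_iUnion.mp (hXC ▸ hx.1)
  exact Set.mem_iUnion₂.mpr ⟨i, activeSet (A i) (b i) x, x, ⟨hx, hCP i ▸ hxC, rfl⟩, rfl⟩

/-- Proposition 2(a): a continuous piecewise linear-quadratic function on a polyhedral
set has only finitely many d-stationary values. -/
theorem stmt_1 {n : ℕ} (X : Set (Fin n → ℝ)) (hX : IsPolyhedral X)
    (ψ : (Fin n → ℝ) → ℝ) (hcont : ContinuousOn ψ X) (hplq : IsPLQOn ψ X) :
    (ψ '' {x | DStat ψ X x}).Finite :=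
  stmt_1_general X ψ hplq
end

section
/- Let X ⊆ ℝⁿ be a polyhedral set and let ψ(x) = ψ₁(x) − max_{1≤i≤k₂} ψ₂ᵢ(x), where ψ₁ : ℝⁿ → ℝ is convex and each ψ₂ᵢ : ℝⁿ → ℝ is concave (i = 1,…,k₂). Then the set ψ(D_{(ψ,X)}) of d-stationary values of ψ on X is finite; in fact it is contained in the finite set { inf_{x∈X} (ψ₁(x) − ψ₂ᵢ(x)) : i = 1,…,k₂ }. -/
/-! At a d-stationary point `x̄` pick an index `i` attaining the max of the `ψ₂ⱼ(x̄)`. The convex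
function `φᵢ = ψ₁ - ψ₂ᵢ` majorizes `ψ` and touches it at `x̄`, so every directional derivative of
`ψ` at `x̄` is bounded by the corresponding difference quotient of `φᵢ`, which by convexity is at
most `φᵢ(x) - φᵢ(x̄)`. Hence `x̄` minimizes `φᵢ` on `X`, and `ψ(x̄) = φᵢ(x̄) = inf_X φᵢ`. -/

open Matrix Filter Topology

lemma le_finMax {k : ℕ} (hk : 0 < k) (g : Fin k → ℝ) (i : Fin k) : g i ≤ finMax hk g :=
  Finset.le_sup' g (Finset.mem_univ i)

lemma exists_finMax_eq {k : ℕ} (hk : 0 < k) (g : Fin k → ℝ) : ∃ i, finMax hk g = g i := by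
  obtain ⟨i, -, hi⟩ := Finset.exists_mem_eq_sup' (Finset.univ_nonempty_iff.mpr ⟨⟨0, hk⟩⟩) g
  exact ⟨i, hi⟩

lemma ConvexOn.sub_le_smul_sub {E : Type*} [AddCommGroup E] [Module ℝ E] {φ : E → ℝ}
    (hφ : ConvexOn ℝ Set.univ φ) (x y : E) {δ : ℝ} (hδ₀ : 0 ≤ δ) (hδ₁ : δ ≤ 1) :
    φ (x + δ • (y - x)) - φ x ≤ δ * (φ y - φ x) := by
  have h := hφ.2 (Set.mem_univ x) (Set.mem_univ y) (sub_nonneg.2 hδ₁) hδ₀ (sub_add_cancel 1 δ)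
  rw [show (1 - δ) • x + δ • y = x + δ • (y - x) by module, smul_eq_mul, smul_eq_mul] at h
  linarith

lemma HasDirDeriv.le_sub_of_convex_majorant {n : ℕ} {ψ φ : (Fin n → ℝ) → ℝ} {x₀ y : Fin n → ℝ}
    {L : ℝ} (hL : HasDirDeriv ψ x₀ (y - x₀) L) (hφ : ConvexOn ℝ Set.univ φ) (hle : ψ ≤ φ)
    (heq : ψ x₀ = φ x₀) : L ≤ φ y - φ x₀ := by
  refine le_of_tendsto hL ?_
  filter_upwards [Ioc_mem_nhdsGT_of_mem (Set.left_mem_Ico.mpr one_pos)] with δ ⟨hδ₀, hδ₁⟩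
  rw [div_le_iff₀ hδ₀]
  linarith [hle (x₀ + δ • (y - x₀)), hφ.sub_le_smul_sub x₀ y hδ₀.le hδ₁]

lemma DStat.isMinOn_of_convex_majorant {n : ℕ} {ψ φ : (Fin n → ℝ) → ℝ} {X : Set (Fin n → ℝ)}
    {x₀ : Fin n → ℝ} (hx₀ : DStat ψ X x₀) (hφ : ConvexOn ℝ Set.univ φ) (hle : ψ ≤ φ)
    (heq : ψ x₀ = φ x₀) : IsMinOn φ X x₀ := fun y hy => by
  obtain ⟨L, hL, hL₀⟩ := hx₀.2 y hy
  exact sub_nonneg.1 (hL₀.trans (hL.le_sub_of_convex_majorant hφ hle heq))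

lemma IsMinOn.csInf_image_eq {α : Type*} {f : α → ℝ} {s : Set α} {a : α} (h : IsMinOn f s a)
    (ha : a ∈ s) : sInf (f '' s) = f a :=
  IsLeast.csInf_eq ⟨Set.mem_image_of_mem f ha, Set.forall_mem_image.2 h⟩

theorem stmt_2_general {n k₂ : ℕ} (hk : 0 < k₂) (X : Set (Fin n → ℝ))
    (ψ₁ : (Fin n → ℝ) → ℝ) (ψ₂ : Fin k₂ → (Fin n → ℝ) → ℝ)
    (hψ₁ : ConvexOn ℝ Set.univ ψ₁) (hψ₂ : ∀ i, ConcaveOn ℝ Set.univ (ψ₂ i))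
    (ψ : (Fin n → ℝ) → ℝ)
    (hψ : ∀ x, ψ x = ψ₁ x - finMax hk (fun i => ψ₂ i x)) :
    ψ '' {x | DStat ψ X x} ⊆
        Set.range (fun i : Fin k₂ => sInf ((fun x => ψ₁ x - ψ₂ i x) '' X)) ∧
      (ψ '' {x | DStat ψ X x}).Finite := by
  have hsub : ψ '' {x | DStat ψ X x} ⊆
      Set.range (fun i : Fin k₂ => sInf ((fun x => ψ₁ x - ψ₂ i x) '' X)) := by
    rintro _ ⟨x₀, hx₀, rfl⟩
    obtain ⟨i, hi⟩ := exists_finMax_eq hk (fun i => ψ₂ i x₀)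
    have hle : ψ ≤ fun x => ψ₁ x - ψ₂ i x := fun x => by
      rw [hψ]
      linarith [le_finMax hk (fun j => ψ₂ j x) i]
    have hmin : IsMinOn (fun x => ψ₁ x - ψ₂ i x) X x₀ :=
      hx₀.isMinOn_of_convex_majorant (hψ₁.sub (hψ₂ i)) hle (by rw [hψ, hi])
    exact ⟨i, (hmin.csInf_image_eq hx₀.1).trans (by rw [hψ, hi])⟩
  exact ⟨hsub, (Set.finite_range _).subset hsub⟩

/-- Proposition 2(b): for `ψ = ψ₁ - max_i ψ₂ᵢ` with `ψ₁` convex and each `ψ₂ᵢ` concave,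
the set of d-stationary values of `ψ` on a polyhedral set `X` is contained in the finite
set of values `inf_{x ∈ X} (ψ₁(x) - ψ₂ᵢ(x))`, `i = 1,…,k₂`; in particular it is finite. -/
theorem stmt_2 {n k₂ : ℕ} (hk : 0 < k₂) (X : Set (Fin n → ℝ)) (hX : IsPolyhedral X)
    (ψ₁ : (Fin n → ℝ) → ℝ) (ψ₂ : Fin k₂ → (Fin n → ℝ) → ℝ)
    (hψ₁ : ConvexOn ℝ Set.univ ψ₁) (hψ₂ : ∀ i, ConcaveOn ℝ Set.univ (ψ₂ i))
    (ψ : (Fin n → ℝ) → ℝ)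
    (hψ : ∀ x, ψ x = ψ₁ x - finMax hk (fun i => ψ₂ i x)) :
    ψ '' {x | DStat ψ X x} ⊆
        Set.range (fun i : Fin k₂ => sInf ((fun x => ψ₁ x - ψ₂ i x) '' X)) ∧
      (ψ '' {x | DStat ψ X x}).Finite :=
  stmt_2_general hk X ψ₁ ψ₂ hψ₁ hψ₂ ψ hψ
end

section
/- Let X ⊆ ℝⁿ be a polyhedral set, let ψ : ℝⁿ → ℝ be a continuous piecewise linear-quadratic function, and let φ : ℝ → ℝ be a convex function or a concave function. Then the composite function f = φ ∘ ψ has only finitely many d-stationary values on X, i.e., the set f(D_{(f,X)}) is finite. -/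
open Matrix Filter Topology

/-!
Classify the d-stationary points `x` by the piece `C i` containing them and by the active
constraints of `X` and of `C i` at `x`. Two stationary points `x`, `y` of the same class lie in a
common face, so the line through them stays in `X ∩ C i` slightly beyond each of them, and on it
`ψ` is a quadratic polynomial `p`. If `p' ≠ 0` at `x`, the nonnegative directional derivatives of
`φ ∘ ψ` in the two opposite directions force the one-sided derivatives of `φ` at `ψ x` to make
`ψ x` a global minimizer (convex `φ`) or maximizer (concave `φ`) of `φ`; there are at most two
such values. Otherwise `p'` vanishes at both `x` and `y`, so the quadratic `p` takes the same
value at both, i.e. `ψ x = ψ y`.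
-/

open Set

section OneDim

variable {p : ℝ → ℝ} {a x : ℝ}

theorem HasDerivAt.tendsto_nhdsGT_nhdsGT (hp : HasDerivAt p a x) (ha : 0 < a) :
    Tendsto p (𝓝[>] x) (𝓝[>] p x) := by
  refine tendsto_nhdsWithin_iff.2 ⟨hp.continuousAt.tendsto.mono_left nhdsWithin_le_nhds, ?_⟩
  have hslope := (hasDerivAt_iff_tendsto_slope.1 hp).mono_left (nhdsGT_le_nhdsNE x)
  filter_upwards [hslope.eventually_const_lt ha, self_mem_nhdsWithin] with y hy hxy
  rwa [slope_def_field, lt_div_iff₀ (sub_pos.2 hxy), zero_mul, sub_pos] at hy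

theorem HasDerivAt.tendsto_nhdsGT_nhdsLT (hp : HasDerivAt p a x) (ha : a < 0) :
    Tendsto p (𝓝[>] x) (𝓝[<] p x) := by
  refine tendsto_nhdsWithin_iff.2 ⟨hp.continuousAt.tendsto.mono_left nhdsWithin_le_nhds, ?_⟩
  have hslope := (hasDerivAt_iff_tendsto_slope.1 hp).mono_left (nhdsGT_le_nhdsNE x)
  filter_upwards [hslope.eventually_lt_const ha, self_mem_nhdsWithin] with y hy hxy
  rwa [slope_def_field, div_lt_iff₀ (sub_pos.2 hxy), zero_mul, sub_neg] at hy

theorem HasDerivWithinAt.comp_of_tendsto {φ : ℝ → ℝ} {d : ℝ} {s t : Set ℝ}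
    (hφ : HasDerivWithinAt φ d t (p x)) (hp : HasDerivWithinAt p a s x)
    (hst : Tendsto p (𝓝[s] x) (𝓝[t] p x)) : HasDerivWithinAt (φ ∘ p) (d * a) s x := by
  rw [mul_comm]
  exact HasDerivAtFilter.scomp hφ hp (hst.prodMap (tendsto_pure_pure _ _))

end OneDim

section Extremum

variable {φ p₁ p₂ : ℝ → ℝ} {x a₁ a₂ L₁ L₂ : ℝ}

theorem ConvexOn.hasDerivWithinAt_comp_of_pos {p : ℝ → ℝ} {a : ℝ} (hφ : ConvexOn ℝ univ φ)
    (hp : HasDerivAt p a x) (ha : 0 < a) :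
    HasDerivWithinAt (φ ∘ p) (derivWithin φ (Ioi (p x)) (p x) * a) (Ioi x) x :=
  (hφ.hasDerivWithinAt_rightDeriv_of_mem_interior (by simp)).comp_of_tendsto hp.hasDerivWithinAt
    (hp.tendsto_nhdsGT_nhdsGT ha)

theorem ConvexOn.hasDerivWithinAt_comp_of_neg {p : ℝ → ℝ} {a : ℝ} (hφ : ConvexOn ℝ univ φ)
    (hp : HasDerivAt p a x) (ha : a < 0) :
    HasDerivWithinAt (φ ∘ p) (derivWithin φ (Iio (p x)) (p x) * a) (Ioi x) x :=
  (hφ.hasDerivWithinAt_leftDeriv_of_mem_interior (by simp)).comp_of_tendsto hp.hasDerivWithinAt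
    (hp.tendsto_nhdsGT_nhdsLT ha)

theorem ConvexOn.isMinOn_of_hasDerivWithinAt_comp_nonneg (hφ : ConvexOn ℝ univ φ)
    (hp₁ : HasDerivAt p₁ a₁ x) (hp₂ : HasDerivAt p₂ a₂ x) (hp : p₁ x = p₂ x)
    (ha₁ : a₁ < 0) (ha₂ : 0 < a₂)
    (h₁ : HasDerivWithinAt (φ ∘ p₁) L₁ (Ioi x) x) (h₂ : HasDerivWithinAt (φ ∘ p₂) L₂ (Ioi x) x)
    (hL₁ : 0 ≤ L₁) (hL₂ : 0 ≤ L₂) : IsMinOn φ univ (p₁ x) := by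
  have e₁ := (uniqueDiffWithinAt_Ioi x).eq_deriv _ h₁ (hφ.hasDerivWithinAt_comp_of_neg hp₁ ha₁)
  have e₂ := (uniqueDiffWithinAt_Ioi x).eq_deriv _ h₂ (hφ.hasDerivWithinAt_comp_of_pos hp₂ ha₂)
  rw [← hp] at e₂
  refine hφ.isMinOn_of_leftDeriv_nonpos_of_rightDeriv_nonneg (by simp) ?_ ?_ <;> nlinarith

theorem ConcaveOn.isMaxOn_of_hasDerivWithinAt_comp_nonneg (hφ : ConcaveOn ℝ univ φ)
    (hp₁ : HasDerivAt p₁ a₁ x) (hp₂ : HasDerivAt p₂ a₂ x) (hp : p₁ x = p₂ x)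
    (ha₁ : a₁ < 0) (ha₂ : 0 < a₂)
    (h₁ : HasDerivWithinAt (φ ∘ p₁) L₁ (Ioi x) x) (h₂ : HasDerivWithinAt (φ ∘ p₂) L₂ (Ioi x) x)
    (hL₁ : 0 ≤ L₁) (hL₂ : 0 ≤ L₂) : IsMaxOn φ univ (p₁ x) := by
  have hnφ := hφ.neg
  have e₁ := (uniqueDiffWithinAt_Ioi x).eq_deriv _ h₁.neg
    (hnφ.hasDerivWithinAt_comp_of_neg hp₁ ha₁)
  have e₂ := (uniqueDiffWithinAt_Ioi x).eq_deriv _ h₂.neg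
    (hnφ.hasDerivWithinAt_comp_of_pos hp₂ ha₂)
  rw [← hp] at e₂
  -- the right derivative of `-φ` is `≤ 0`, the left one `≥ 0`, and left `≤` right
  have hle := hnφ.leftDeriv_le_rightDeriv_of_mem_interior (x := p₁ x) (by simp)
  have hmin := hnφ.isMinOn_of_rightDeriv_eq_zero (by simp) (by nlinarith)
  simpa using hmin.neg

theorem isExtrOn_of_hasDerivWithinAt_comp_nonneg
    (hφ : ConvexOn ℝ univ φ ∨ ConcaveOn ℝ univ φ)
    (hp₁ : HasDerivAt p₁ a₁ x) (hp₂ : HasDerivAt p₂ a₂ x) (hp : p₁ x = p₂ x) (ha : a₁ * a₂ < 0)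
    (h₁ : HasDerivWithinAt (φ ∘ p₁) L₁ (Ioi x) x) (h₂ : HasDerivWithinAt (φ ∘ p₂) L₂ (Ioi x) x)
    (hL₁ : 0 ≤ L₁) (hL₂ : 0 ≤ L₂) : IsExtrOn φ univ (p₁ x) := by
  wlog ha₁ : a₁ < 0 generalizing p₁ p₂ a₁ a₂ L₁ L₂
  · rw [hp]
    exact this hp₂ hp₁ hp.symm (by linarith [mul_comm a₁ a₂]) h₂ h₁ hL₂ hL₁ (by nlinarith)
  have ha₂ : 0 < a₂ := by nlinarith
  rcases hφ with hφ | hφ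
  · exact (hφ.isMinOn_of_hasDerivWithinAt_comp_nonneg hp₁ hp₂ hp ha₁ ha₂ h₁ h₂ hL₁ hL₂).isExtr
  · exact (hφ.isMaxOn_of_hasDerivWithinAt_comp_nonneg hp₁ hp₂ hp ha₁ ha₂ h₁ h₂ hL₁ hL₂).isExtr

end Extremum

section Directional

variable {n : ℕ} {f g : (Fin n → ℝ) → ℝ} {x v : Fin n → ℝ} {L : ℝ}

theorem hasDirDeriv_iff_hasDerivWithinAt :
    HasDirDeriv f x v L ↔ HasDerivWithinAt (fun δ : ℝ => f (x + δ • v)) L (Ioi 0) 0 := by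
  rw [hasDerivWithinAt_iff_tendsto_slope' self_notMem_Ioi, HasDirDeriv]
  congr! 2 with δ
  simp [slope_def_field]

theorem HasDirDeriv.hasDerivWithinAt_of_eqOn {C : Set (Fin n → ℝ)} (h : HasDirDeriv f x v L)
    (hfg : EqOn f g C) (hC : Convex ℝ C) (hx : x ∈ C) (hxv : x + v ∈ C) :
    HasDerivWithinAt (fun δ : ℝ => g (x + δ • v)) L (Ioi 0) 0 := by
  refine (hasDirDeriv_iff_hasDerivWithinAt.1 h).congr_of_eventuallyEq ?_
    (by simpa using (hfg hx).symm)
  filter_upwards [Ioc_mem_nhdsGT zero_lt_one] with δ hδ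
  exact (hfg (hC.add_smul_mem hx hxv ⟨hδ.1.le, hδ.2⟩)).symm

end Directional

theorem IsQuadraticFn.exists_eq_add_mul_add_sq {n : ℕ} {F : (Fin n → ℝ) → ℝ}
    (hF : IsQuadraticFn F) (x v : Fin n → ℝ) :
    ∃ a c : ℝ, ∀ t : ℝ, F (x + t • v) = F x + t * a + t ^ 2 * c := by
  obtain ⟨Q, q, α, -, hFQ⟩ := hF
  refine ⟨(x ⬝ᵥ Q *ᵥ v + v ⬝ᵥ Q *ᵥ x) / 2 + q ⬝ᵥ v, v ⬝ᵥ Q *ᵥ v / 2, fun t => ?_⟩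
  simp only [hFQ, mulVec_add, mulVec_smul, dotProduct_add, add_dotProduct, dotProduct_smul,
    smul_dotProduct, smul_eq_mul]
  ring

theorem hasDerivAt_add_mul_add_sq (u a c : ℝ) :
    HasDerivAt (fun t : ℝ => u + t * a + t ^ 2 * c) a 0 := by
  simpa using (((hasDerivAt_id' (0 : ℝ)).mul_const a).const_add u).fun_add
    ((hasDerivAt_pow 2 (0 : ℝ)).mul_const c)

section Polyhedral

variable {n m : ℕ}

theorem IsPolyhedral.convex {X : Set (Fin n → ℝ)} (hX : IsPolyhedral X) : Convex ℝ X := by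
  obtain ⟨m, A, b, rfl⟩ := hX
  simp only [ofPred_forall]
  exact convex_iInter fun j =>
    convex_halfSpace_le ⟨dotProduct_add (A j), fun c y => dotProduct_smul c (A j) y⟩ (b j)

theorem eventually_add_smul_sub_mem_of_active_imp {A : Fin m → Fin n → ℝ} {b : Fin m → ℝ}
    {x y : Fin n → ℝ} (hx : x ∈ {z | ∀ j, A j ⬝ᵥ z ≤ b j})
    (hxy : ∀ j, A j ⬝ᵥ x = b j → A j ⬝ᵥ y = b j) :
    ∀ᶠ s in 𝓝 (0 : ℝ), x + s • (x - y) ∈ {z | ∀ j, A j ⬝ᵥ z ≤ b j} := by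
  simp only [mem_ofPred_eq]
  rw [eventually_all]
  intro j
  have hline : ∀ s : ℝ, A j ⬝ᵥ (x + s • (x - y)) = A j ⬝ᵥ x + s * (A j ⬝ᵥ x - A j ⬝ᵥ y) := by
    intro s
    simp only [dotProduct_add, dotProduct_smul, dotProduct_sub, smul_eq_mul]
  simp only [hline]
  rcases (hx j).eq_or_lt with hact | hlt
  · simp [hact, hxy j hact]
  · have hcont : Continuous fun s : ℝ => A j ⬝ᵥ x + s * (A j ⬝ᵥ x - A j ⬝ᵥ y) := by fun_prop
    exact (hcont.tendsto' 0 _ (by simp)).eventually_le_const hlt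

end Polyhedral

theorem Set.finite_image_of_factorsThrough {α β ι : Type*} [Finite ι] {S : Set α} {f : α → β}
    (g : α → ι) (h : ∀ x ∈ S, ∀ y ∈ S, g x = g y → f x = f y) : (f '' S).Finite := by
  have : Finite (f '' S) := Finite.of_injective (fun z : f '' S => g z.2.choose) fun z z' hzz' =>
    Subtype.ext <| by
      rw [← z.2.choose_spec.2, ← z'.2.choose_spec.2]
      exact h _ z.2.choose_spec.1 _ z'.2.choose_spec.1 hzz'
  exact Set.toFinite _

theorem Set.finite_image_isExtrOn {α β : Type*} [PartialOrder β] (f : α → β) :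
    (f '' {u | IsExtrOn f univ u}).Finite := by
  have hmin : (f '' {u | IsMinOn f univ u}).Subsingleton := by
    rintro _ ⟨u, hu, rfl⟩ _ ⟨u', hu', rfl⟩
    exact le_antisymm (hu (mem_univ u')) (hu' (mem_univ u))
  have hmax : (f '' {u | IsMaxOn f univ u}).Subsingleton := by
    rintro _ ⟨u, hu, rfl⟩ _ ⟨u', hu', rfl⟩
    exact le_antisymm (hu' (mem_univ u)) (hu (mem_univ u'))
  refine (hmin.finite.union hmax.finite).subset ?_
  rintro _ ⟨u, hu | hu, rfl⟩
  exacts [Or.inl ⟨u, hu, rfl⟩, Or.inr ⟨u, hu, rfl⟩]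

section Stationary

variable {n : ℕ} {X C : Set (Fin n → ℝ)} {ψ F : (Fin n → ℝ) → ℝ} {φ : ℝ → ℝ} {x y : Fin n → ℝ}

theorem DStat.lineDeriv_eq_zero_of_not_isExtrOn {s a c : ℝ}
    (hφ : ConvexOn ℝ univ φ ∨ ConcaveOn ℝ univ φ)
    (hx : DStat (φ ∘ ψ) X x) (hC : Convex ℝ C) (hψF : EqOn ψ F C) (hxC : x ∈ C)
    (hy : y ∈ X ∩ C) (hs : 0 < s) (hw : x + s • (x - y) ∈ X ∩ C)
    (hline : ∀ t : ℝ, F (x + t • (y - x)) = F x + t * a + t ^ 2 * c)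
    (hext : ¬ IsExtrOn φ univ (ψ x)) : a = 0 := by
  by_contra ha
  obtain ⟨L₁, h₁, hL₁⟩ := hx.2 y hy.1
  obtain ⟨L₂, h₂, hL₂⟩ := hx.2 _ hw.1
  have hφψF : EqOn (φ ∘ ψ) (φ ∘ F) C := fun z hz => congrArg φ (hψF hz)
  have d₁ := h₁.hasDerivWithinAt_of_eqOn hφψF hC hxC (by simpa using hy.2)
  have d₂ := h₂.hasDerivWithinAt_of_eqOn hφψF hC hxC (by simpa using hw.2)
  have e₁ : (fun δ : ℝ => (φ ∘ F) (x + δ • (y - x))) =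
      φ ∘ fun δ => F x + δ * a + δ ^ 2 * c := by
    funext δ
    simp [hline]
  have e₂ : (fun δ : ℝ => (φ ∘ F) (x + δ • (x + s • (x - y) - x))) =
      φ ∘ fun δ => F x + δ * (-(s * a)) + δ ^ 2 * (s ^ 2 * c) := by
    funext δ
    have hpt : x + δ • (x + s • (x - y) - x) = x + (-(s * δ)) • (y - x) := by module
    simp only [Function.comp, hpt, hline]
    ring_nf
  rw [e₁] at d₁
  rw [e₂] at d₂
  have hprod : a * (-(s * a)) < 0 := by
    have : 0 < s * a ^ 2 := by positivity
    nlinarith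
  apply hext
  simpa [hψF hxC] using isExtrOn_of_hasDerivWithinAt_comp_nonneg hφ
    (hasDerivAt_add_mul_add_sq (F x) a c)
    (hasDerivAt_add_mul_add_sq (F x) (-(s * a)) (s ^ 2 * c)) (by simp) hprod d₁ d₂ hL₁ hL₂

theorem DStat.apply_eq_of_not_isExtrOn (hφ : ConvexOn ℝ univ φ ∨ ConcaveOn ℝ univ φ)
    (hF : IsQuadraticFn F) (hC : Convex ℝ C) (hψF : EqOn ψ F C)
    (hx : DStat (φ ∘ ψ) X x) (hy : DStat (φ ∘ ψ) X y) (hxC : x ∈ C) (hyC : y ∈ C)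
    (hwx : ∀ᶠ s : ℝ in 𝓝[>] 0, x + s • (x - y) ∈ X ∩ C)
    (hwy : ∀ᶠ s : ℝ in 𝓝[>] 0, y + s • (y - x) ∈ X ∩ C)
    (hxe : ¬ IsExtrOn φ univ (ψ x)) (hye : ¬ IsExtrOn φ univ (ψ y)) : ψ x = ψ y := by
  obtain ⟨a, c, hline⟩ := hF.exists_eq_add_mul_add_sq x (y - x)
  have hFy : F y = F x + a + c := by simpa using hline 1
  have hline' : ∀ t : ℝ, F (y + t • (x - y)) = F y + t * (-(a + 2 * c)) + t ^ 2 * c := by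
    intro t
    have hpt : y + t • (x - y) = x + (1 - t) • (y - x) := by module
    rw [hpt, hline, hFy]
    ring
  obtain ⟨s, hsw, hs⟩ := (hwx.and self_mem_nhdsWithin).exists
  obtain ⟨s', hs'w, hs'⟩ := (hwy.and self_mem_nhdsWithin).exists
  have ha := hx.lineDeriv_eq_zero_of_not_isExtrOn hφ hC hψF hxC ⟨hy.1, hyC⟩ hs hsw hline hxe
  have ha' := hy.lineDeriv_eq_zero_of_not_isExtrOn hφ hC hψF hyC ⟨hx.1, hxC⟩ hs' hs'w hline' hye
  rw [hψF hxC, hψF hyC, hFy]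
  linarith

end Stationary

theorem stmt_14_general {n : ℕ} (X : Set (Fin n → ℝ)) (hX : IsPolyhedral X)
    (ψ : (Fin n → ℝ) → ℝ) (hplq : IsPLQOn ψ Set.univ)
    (φ : ℝ → ℝ) (hφ : ConvexOn ℝ Set.univ φ ∨ ConcaveOn ℝ Set.univ φ) :
    ((φ ∘ ψ) '' {x | DStat (φ ∘ ψ) X x}).Finite := by
  obtain ⟨m, A, b, rfl⟩ := hX
  obtain ⟨k, C, F, hCpoly, hF, hcover, hψF⟩ := hplq
  have hCconv : ∀ i, Convex ℝ (C i) := fun i => (hCpoly i).convex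
  choose M Ac bc hC using hCpoly
  set S := {x | DStat (φ ∘ ψ) {z | ∀ j, A j ⬝ᵥ z ≤ b j} x}
  have hsplit : (φ ∘ ψ) '' S ⊆ φ '' {u | IsExtrOn φ univ u} ∪
      ⋃ i, φ '' (ψ '' {x | x ∈ S ∩ C i ∧ ¬ IsExtrOn φ univ (ψ x)}) := by
    rintro _ ⟨x, hx, rfl⟩
    by_cases hext : IsExtrOn φ univ (ψ x)
    · exact Or.inl ⟨ψ x, hext, rfl⟩
    · obtain ⟨i, hi⟩ := mem_iUnion.1 (hcover ▸ mem_univ x)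
      exact Or.inr (mem_iUnion.2 ⟨i, ψ x, ⟨x, ⟨⟨hx, hi⟩, hext⟩, rfl⟩, rfl⟩)
  refine ((finite_image_isExtrOn φ).union
    (finite_iUnion fun i => Finite.image φ ?_)).subset hsplit
  refine finite_image_of_factorsThrough
    (fun x => ({j | A j ⬝ᵥ x = b j}, {j | Ac i j ⬝ᵥ x = bc i j})) ?_
  rintro x ⟨⟨hx, hxC⟩, hxe⟩ y ⟨⟨hy, hyC⟩, hye⟩ hxy
  simp only [Prod.mk.injEq, Set.ext_iff, mem_ofPred_eq] at hxy
  refine hx.apply_eq_of_not_isExtrOn hφ (hF i) (hCconv i) (hψF i) hy hxC hyC ?_ ?_ hxe hye <;>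
    rw [hC i] at hxC hyC ⊢
  · exact ((eventually_add_smul_sub_mem_of_active_imp hx.1 fun j => (hxy.1 j).1).and
      (eventually_add_smul_sub_mem_of_active_imp hxC fun j => (hxy.2 j).1)).filter_mono
      nhdsWithin_le_nhds
  · exact ((eventually_add_smul_sub_mem_of_active_imp hy.1 fun j => (hxy.1 j).2).and
      (eventually_add_smul_sub_mem_of_active_imp hyC fun j => (hxy.2 j).2)).filter_mono
      nhdsWithin_le_nhds

/-- Proposition 11 (with PLQ inner function): if `ψ` is a continuous piecewise
linear-quadratic function on `ℝⁿ` and `φ : ℝ → ℝ` is convex or concave, then the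
composite `f = φ ∘ ψ` has only finitely many d-stationary values on a polyhedral set. -/
theorem stmt_14 {n : ℕ} (X : Set (Fin n → ℝ)) (hX : IsPolyhedral X)
    (ψ : (Fin n → ℝ) → ℝ) (hψcont : Continuous ψ) (hplq : IsPLQOn ψ Set.univ)
    (φ : ℝ → ℝ) (hφ : ConvexOn ℝ Set.univ φ ∨ ConcaveOn ℝ Set.univ φ) :
    ((φ ∘ ψ) '' {x | DStat (φ ∘ ψ) X x}).Finite :=
  stmt_14_general X hX ψ hplq φ hφ
end

section
/- Let ψ : ℝⁿ → ℝ be continuous and let S ⊆ ℝⁿ be a set such that the image ψ(S) is a finite set. Let {xᵏ} be a bounded sequence in ℝⁿ every accumulation point of which belongs to S. Then the sequence of values {ψ(xᵏ)} converges (necessarily to an element of ψ(S)) if and only if ψ(x^{k+1}) − ψ(xᵏ) → 0. -/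
open Filter Set Topology

/-!
When the increments `yₖ₊₁ - yₖ` of a real sequence tend to zero, the sequence cannot
jump over an interval infinitely often, so its set of cluster values is order-connected. For
`y = ψ ∘ x`, every cluster value is `ψ p` for an accumulation point `p ∈ S` of `x`, so the cluster
set is finite, hence a single point; a sequence in a compact set with a unique cluster value
converges to it.
-/

section CrossingInterval

variable {α : Type*} [AddCommGroup α] [LinearOrder α] [IsOrderedAddMonoid α]

theorem exists_apply_mem_Icc_add_of_apply_succ_le_add {y : ℕ → α} {c δ : α} {k m : ℕ}
    (hkm : k ≤ m) (hk : y k < c) (hm : c ≤ y m) (hstep : ∀ j ∈ Ico k m, y (j + 1) ≤ y j + δ) :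
    ∃ j ∈ Ioc k m, y j ∈ Icc c (c + δ) := by
  induction m, hkm using Nat.le_induction with
  | base => exact absurd hm (not_le.2 hk)
  | succ m hkm ih =>
    by_cases hcm : c ≤ y m
    · obtain ⟨j, hj, hyj⟩ := ih hcm fun j hj => hstep j ⟨hj.1, hj.2.trans m.lt_succ_self⟩
      exact ⟨j, ⟨hj.1, hj.2.trans m.le_succ⟩, hyj⟩
    · have hsucc := hstep m ⟨hkm, m.lt_succ_self⟩
      exact ⟨m + 1, ⟨Nat.lt_succ_of_le hkm, le_rfl⟩, hm,
        hsucc.trans (add_le_add_left (le_of_not_ge hcm) δ)⟩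

end CrossingInterval

section VanishingIncrements

variable {y : ℕ → ℝ}

theorem mapClusterPt_of_mem_Ioo_of_tendsto_succ_sub
    (hdiff : Tendsto (fun k => y (k + 1) - y k) atTop (𝓝 0)) {a b c : ℝ}
    (ha : MapClusterPt a atTop y) (hb : MapClusterPt b atTop y) (hc : c ∈ Ioo a b) :
    MapClusterPt c atTop y := by
  rw [Metric.nhds_basis_ball.mapClusterPt_iff_frequently]
  intro ε hε
  have hstep : ∀ᶠ j in atTop, y (j + 1) ≤ y j + ε / 2 :=
    (hdiff.eventually (eventually_le_nhds (half_pos hε))).mono fun j hj => by linarith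
  rw [frequently_atTop]
  intro M
  -- past `N` the steps are at most `ε / 2`, so climbing from below `c` to above it lands near `c`
  obtain ⟨N, hN⟩ := eventually_atTop.1 hstep
  obtain ⟨k, hk, hyk⟩ :=
    frequently_atTop.1 (mapClusterPt_iff_frequently.1 ha _ (Iio_mem_nhds hc.1)) (max M N)
  obtain ⟨m, hm, hym⟩ :=
    frequently_atTop.1 (mapClusterPt_iff_frequently.1 hb _ (Ioi_mem_nhds hc.2)) k
  obtain ⟨j, hj, hyj⟩ := exists_apply_mem_Icc_add_of_apply_succ_le_add hm hyk hym.le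
    fun j hj => hN j ((le_max_right M N).trans (hk.trans hj.1))
  refine ⟨j, (le_max_left M N).trans (hk.trans hj.1.le), ?_⟩
  rw [Metric.mem_ball, Real.dist_eq, abs_lt]
  constructor <;> linarith [hyj.1, hyj.2]

theorem subsingleton_mapClusterPt_of_tendsto_succ_sub
    (hdiff : Tendsto (fun k => y (k + 1) - y k) atTop (𝓝 0))
    (hfin : {L | MapClusterPt L atTop y}.Finite) : {L | MapClusterPt L atTop y}.Subsingleton := by
  have hnot_lt : ∀ a b, MapClusterPt a atTop y → MapClusterPt b atTop y → ¬ a < b :=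
    fun a b ha hb hab => (Ioo_infinite hab).mono
      (fun c hc => mapClusterPt_of_mem_Ioo_of_tendsto_succ_sub hdiff ha hb hc) hfin
  exact fun a ha b hb => le_antisymm (not_lt.1 (hnot_lt b a hb ha)) (not_lt.1 (hnot_lt a b ha hb))

end VanishingIncrements

theorem IsCompact.exists_clusterPt_eq_of_mapClusterPt {X Y : Type*} [TopologicalSpace X]
    [TopologicalSpace Y] [T2Space Y] {K : Set X} {l : Filter X} {f : X → Y} {L : Y}
    (hK : IsCompact K) (hf : Continuous f) (hl : l ≤ 𝓟 K) (hL : MapClusterPt L l f) :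
    ∃ p ∈ K, ClusterPt p l ∧ f p = L := by
  have hG : (l ⊓ comap f (𝓝 L)).NeBot := by
    rw [← map_neBot_iff f, Filter.push_pull, inf_comm]
    exact hL
  obtain ⟨p, hpK, hp⟩ := hK.exists_clusterPt (f := l ⊓ comap f (𝓝 L)) (inf_le_left.trans hl)
  refine ⟨p, hpK, hp.mono inf_le_left, ?_⟩
  have hne : (𝓝 p ⊓ (l ⊓ comap f (𝓝 L))).NeBot := hp
  have hfp : Tendsto f (𝓝 p ⊓ (l ⊓ comap f (𝓝 L))) (𝓝 (f p)) :=
    (hf.tendsto p).mono_left inf_le_left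
  exact tendsto_nhds_unique hfp (tendsto_comap.mono_left (inf_le_right.trans inf_le_right))

/-- Proposition 14: let `ψ` be continuous and `S` a set with `ψ(S)` finite. If `{xᵏ}` is
a bounded sequence every accumulation point of which lies in `S`, then `{ψ(xᵏ)}` converges
(necessarily to an element of `ψ(S)`) iff `ψ(x^{k+1}) − ψ(xᵏ) → 0`. -/
theorem stmt_16 {n : ℕ} (ψ : (Fin n → ℝ) → ℝ) (hψ : Continuous ψ)
    (S : Set (Fin n → ℝ)) (hS : (ψ '' S).Finite)
    (x : ℕ → Fin n → ℝ) (hbdd : ∃ R, ∀ k, ‖x k‖ ≤ R)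
    (hacc : ∀ p, MapClusterPt p atTop x → p ∈ S) :
    (∃ L ∈ ψ '' S, Tendsto (fun k => ψ (x k)) atTop (nhds L)) ↔
      Tendsto (fun k => ψ (x (k + 1)) - ψ (x k)) atTop (nhds 0) := by
  obtain ⟨R, hR⟩ := hbdd
  have hK : IsCompact (Metric.closedBall (0 : Fin n → ℝ) R) := isCompact_closedBall 0 R
  have hxK : ∀ᶠ k in atTop, x k ∈ Metric.closedBall 0 R :=
    Eventually.of_forall fun k => mem_closedBall_zero_iff.2 (hR k)
  have hvalues : {L | MapClusterPt L atTop (ψ ∘ x)} ⊆ ψ '' S := fun L hL =>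
    let ⟨p, _, hp, hpL⟩ := hK.exists_clusterPt_eq_of_mapClusterPt hψ (le_principal_iff.2 hxK)
      (mapClusterPt_comp.1 hL)
    ⟨p, hacc p hp, hpL⟩
  constructor
  · rintro ⟨L, -, hL⟩
    simpa using (hL.comp (tendsto_add_atTop_nat 1)).sub hL
  · intro hdiff
    have hψK : ∀ᶠ k in atTop, (ψ ∘ x) k ∈ ψ '' Metric.closedBall 0 R :=
      hxK.mono fun k hk => mem_image_of_mem ψ hk
    obtain ⟨L, -, hL⟩ := (hK.image hψ).exists_mapClusterPt_of_frequently hψK.frequently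
    refine ⟨L, hvalues hL, (hK.image hψ).tendsto_nhds_of_unique_mapClusterPt hψK ?_⟩
    exact fun L' _ hL' =>
      subsingleton_mapClusterPt_of_tendsto_succ_sub hdiff (hS.subset hvalues) hL' hL
end
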